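/- Let p be a prime, G a finite p-group, k = ZMod p, kG the group algebra with Jacobson radical J, A a finite type, M the free monoid on A, ≤ an admissible linear order on M, and φ : FreeAlgebra k A →ₐ[k] kG a surjective k-algebra homomorphism with φ(x_a) ∈ J for every generator. Suppose N is such that φ(w) = 0 for every word w of length N. For each minimal tip w let ν(w) denote the unique k-linear combination of nontips whose image under φ equals φ(w). Then ker φ is generated, as a two-sided ideal of FreeAlgebra k A, by the set {w - ν(w) : w a minimal tip} together with the set of all words of length N. -/

import Mathlib

/-! Read at its largest word, a linear relation among the images of nontips would exhibit that
word as a tip; so these images are linearly independent and `φ` is injective on the span of the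
nontips. In particular `ν t` involves only nontips smaller than `t`, since `φ t` is already a
combination of those.

Modulo the ideal `I` spanned by the `w - ν w` and the words of length `N`, every word reduces to
a combination of nontips: a tip has a minimal tip `t` as a factor `u * t * v`, and replacing `t`
by `ν t` produces words `u * t' * v` smaller than `u * t * v` by admissibility. Only finitely many
words are shorter than `N`, so this reduction terminates. Hence
`FreeAlgebra k A = I + span (nontips)`, and the nontip part of an element of `ker φ` lies in
`ker φ ∩ span (nontips) = 0`. -/

noncomputable def wordMonomial (k : Type*) [CommRing k] {A : Type*} (w : FreeMonoid A) :
    FreeAlgebra k A :=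
  FreeMonoid.lift (FreeAlgebra.ι k) w

open Submodule Set

section Nontips

variable (k : Type*) {ι V : Type*} [Semiring k] [AddCommMonoid V] [Module k V]

def nontips [Preorder ι] (g : ι → V) : Set ι :=
  {w | g w ∉ span k (g '' Iio w)}

variable {k}

theorem mem_sup_span_image_inter_Iic_of_wellFoundedOn [Preorder ι] {m : ι → V}
    {Q : Submodule k V} {P s : Set ι} (hs : s.WellFoundedOn (· < ·))
    (hout : ∀ w ∉ s, m w ∈ Q) (hred : ∀ w ∈ s, w ∉ P → m w ∈ Q ⊔ span k (m '' Iio w))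
    (w : ι) : m w ∈ Q ⊔ span k (m '' (P ∩ Iic w)) := by
  by_cases hw : w ∈ s
  swap
  · exact mem_sup_left (hout w hw)
  refine hs.induction hw (P := fun w => m w ∈ Q ⊔ span k (m '' (P ∩ Iic w))) fun y _ ih => ?_
  by_cases hyP : y ∈ P
  · exact mem_sup_right (subset_span ⟨y, ⟨hyP, le_rfl⟩, rfl⟩)
  have hle : Q ⊔ span k (m '' Iio y) ≤ Q ⊔ span k (m '' (P ∩ Iic y)) := by
    refine sup_le le_sup_left (span_le.mpr ?_)
    rintro _ ⟨v, hvy : v < y, rfl⟩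
    by_cases hv : v ∈ s
    · have hIic : P ∩ Iic v ⊆ P ∩ Iic y :=
        inter_subset_inter_right _ (Iic_subset_Iic.mpr hvy.le)
      exact (sup_le_sup_left (span_mono (image_mono hIic)) Q) (ih v hv hvy)
    · exact mem_sup_left (hout v hv)
  exact hle (hred y ‹_› hyP)

theorem mem_span_image_nontips_inter_Iio [PartialOrder ι] {g : ι → V}
    (hwf : {w | g w ≠ 0}.WellFoundedOn (· < ·)) {w : ι} (hw : w ∉ nontips k g) :
    g w ∈ span k (g '' (nontips k g ∩ Iio w)) := by
  have h := mem_sup_span_image_inter_Iic_of_wellFoundedOn (Q := (⊥ : Submodule k V)) hwf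
    (fun v hv => by simpa using hv) (fun v _ hv => mem_sup_right (not_not.mp hv)) w
  rw [bot_sup_eq] at h
  have hsub : nontips k g ∩ Iic w ⊆ nontips k g ∩ Iio w := fun v hv =>
    ⟨hv.1, lt_of_le_of_ne hv.2 fun hvw => hw (hvw ▸ hv.1)⟩
  exact span_mono (image_mono hsub) h

end Nontips

section Independence

variable {k ι V : Type*} [DivisionRing k] [AddCommGroup V] [Module k V] [LinearOrder ι]

theorem linearIndepOn_nontips (g : ι → V) : LinearIndepOn k g (nontips k g) := by
  rw [linearIndepOn_iff]
  intro l hl hl0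
  by_contra hne
  have hsupp : l.support.Nonempty := Finsupp.support_nonempty_iff.mpr hne
  set w := l.support.max' hsupp
  have hw : w ∈ l.support := l.support.max'_mem hsupp
  have hlw : l w ≠ 0 := Finsupp.mem_support_iff.mp hw
  rw [Finsupp.linearCombination_apply, Finsupp.sum, ← Finset.add_sum_erase _ _ hw] at hl0
  have hgw : g w = (l w)⁻¹ • -∑ v ∈ l.support.erase w, l v • g v := by
    rw [← eq_neg_of_add_eq_zero_left hl0, smul_smul, inv_mul_cancel₀ hlw, one_smul]
  refine hl hw (hgw ▸ smul_mem _ _ (neg_mem (sum_mem fun v hv => smul_mem _ _ ?_)))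
  exact subset_span ⟨v, lt_of_le_of_ne (l.support.le_max' v (Finset.mem_of_mem_erase hv))
    (Finset.ne_of_mem_erase hv), rfl⟩

theorem disjoint_span_image_nontips_ker {F : Type*} [AddCommGroup F] [Module k F]
    (f : F →ₗ[k] V) (m : ι → F) :
    Disjoint (span k (m '' nontips k (fun w => f (m w)))) (LinearMap.ker f) := by
  rw [image_eq_range]
  exact range_ker_disjoint (linearIndepOn_nontips (fun w => f (m w)))

theorem mem_span_image_nontips_inter_Iio_of_map_eq {F : Type*} [AddCommGroup F] [Module k F]
    {f : F →ₗ[k] V} {m : ι → F} (hwf : {w | f (m w) ≠ 0}.WellFoundedOn (· < ·)) {t : ι}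
    (ht : t ∉ nontips k (fun w => f (m w))) {x : F}
    (hx : x ∈ span k (m '' nontips k (fun w => f (m w)))) (hfx : f x = f (m t)) :
    x ∈ span k (m '' (nontips k (fun w => f (m w)) ∩ Iio t)) := by
  obtain ⟨y, hy, hfy⟩ :
      f (m t) ∈ (span k (m '' (nontips k (fun w => f (m w)) ∩ Iio t))).map f := by
    rw [map_span, ← image_comp]
    exact mem_span_image_nontips_inter_Iio hwf ht
  have hxy : x - y = 0 := disjoint_def.mp (disjoint_span_image_nontips_ker f m) _
    (sub_mem hx (span_mono (image_mono inter_subset_left) hy)) (by simp [hfx, hfy])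
  rwa [sub_eq_zero.mp hxy]

end Independence

namespace FreeMonoid

variable {A : Type*}

theorem exists_minimal_factor {P : FreeMonoid A → Prop} {w : FreeMonoid A} (hw : P w) :
    ∃ u t v, w = u * t * v ∧ P t ∧
      ∀ t' u' v', t = u' * t' * v' → ¬(u' = 1 ∧ v' = 1) → ¬P t' := by
  induction hn : w.length using Nat.strong_induction_on generalizing w with
  | _ n ih =>
  by_cases hmin : ∀ t' u' v', w = u' * t' * v' → ¬(u' = 1 ∧ v' = 1) → ¬P t'
  · exact ⟨1, w, 1, by simp, hw, hmin⟩
  simp only [not_forall, not_not] at hmin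
  obtain ⟨t', u', v', rfl, hne, ht'⟩ := hmin
  have hlt : t'.length < n := by
    rw [← length_eq_zero, ← length_eq_zero] at hne
    simp only [length_mul] at hn
    omega
  obtain ⟨u, t, v, rfl, ht, hmin⟩ := ih _ hlt ht' rfl
  exact ⟨u' * u, t, v * v', by simp only [mul_assoc], ht, hmin⟩

theorem exists_mul_of_le_length {w : FreeMonoid A} {N : ℕ} (h : N ≤ w.length) :
    ∃ u v, w = u * v ∧ u.length = N :=
  ⟨ofList (w.toList.take N), ofList (w.toList.drop N),
    by rw [← ofList_append, List.take_append_drop, ofList_toList],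
    by simpa [length] using h⟩

theorem finite_setOf_length_lt [Finite A] (N : ℕ) : {w : FreeMonoid A | w.length < N}.Finite :=
  (List.finite_length_lt A N).preimage toList.injective.injOn

end FreeMonoid

section FreeAlgebra

variable {k A : Type*}

theorem wordMonomial_mul [CommRing k] (u v : FreeMonoid A) :
    wordMonomial k (u * v) = wordMonomial k u * wordMonomial k v :=
  map_mul _ u v

theorem span_range_wordMonomial (k : Type*) [CommRing k] :
    span k (range (wordMonomial k (A := A))) = ⊤ := by
  have hrange : range (wordMonomial k (A := A)) =
      Submonoid.closure (range (FreeAlgebra.ι k (X := A))) := by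
    rw [← FreeMonoid.mrange_lift, MonoidHom.coe_mrange]
    rfl
  rw [hrange, ← Algebra.adjoin_eq_span, FreeAlgebra.adjoin_range_ι, Algebra.top_toSubmodule]

theorem wordMonomial_mem_sup_span_Iio_of_sub_mem [CommRing k] [LinearOrder (FreeMonoid A)]
    (hadm : ∀ u v₁ v₂ w : FreeMonoid A, v₁ ≤ v₂ → u * v₁ * w ≤ u * v₂ * w)
    {I : TwoSidedIdeal (FreeAlgebra k A)} {t : FreeMonoid A} {x : FreeAlgebra k A}
    (htx : wordMonomial k t - x ∈ I) (hx : x ∈ span k (wordMonomial k '' Iio t))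
    (u v : FreeMonoid A) :
    wordMonomial k (u * t * v) ∈
      I.asIdeal.restrictScalars k ⊔ span k (wordMonomial k '' Iio (u * t * v)) := by
  have hsplit : wordMonomial k (u * t * v) = wordMonomial k u * (wordMonomial k t - x) *
      wordMonomial k v + wordMonomial k u * x * wordMonomial k v := by
    rw [wordMonomial_mul, wordMonomial_mul]
    noncomm_ring
  rw [hsplit]
  refine add_mem (mem_sup_left ?_) (mem_sup_right ?_)
  · exact TwoSidedIdeal.mem_asIdeal.mpr (I.mul_mem_right _ _ (I.mul_mem_left _ _ htx))
  let f := LinearMap.mulRight k (wordMonomial k v) ∘ₗ LinearMap.mulLeft k (wordMonomial k u)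
  refine span_mono ?_ (apply_mem_span_image_of_mem_span f hx)
  rintro _ ⟨_, ⟨v', hv't, rfl⟩, rfl⟩
  refine ⟨u * v' * v, lt_of_le_of_ne (hadm u v' t v hv't.le) fun h => hv't.ne ?_, ?_⟩
  · exact mul_left_cancel (mul_right_cancel h)
  · simp [f, wordMonomial_mul, mul_assoc]

theorem wordMonomial_mem_of_le_length [CommRing k] {I : TwoSidedIdeal (FreeAlgebra k A)} {N : ℕ}
    (hN : ∀ w : FreeMonoid A, w.length = N → wordMonomial k w ∈ I) {w : FreeMonoid A}
    (hw : N ≤ w.length) : wordMonomial k w ∈ I := by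
  obtain ⟨u, v, rfl, hu⟩ := FreeMonoid.exists_mul_of_le_length hw
  rw [wordMonomial_mul]
  exact I.mul_mem_right _ _ (hN u hu)

variable [Field k] [LinearOrder (FreeMonoid A)] {B : Type*} [Ring B] [Algebra k B]
  (φ : FreeAlgebra k A →ₐ[k] B)

theorem wordMonomial_mem_sup_span_Iio_of_reduction
    (hadm : ∀ u v₁ v₂ w : FreeMonoid A, v₁ ≤ v₂ → u * v₁ * w ≤ u * v₂ * w)
    (hwf : {w | φ (wordMonomial k w) ≠ 0}.WellFoundedOn (· < ·))
    {I : TwoSidedIdeal (FreeAlgebra k A)} {t : FreeMonoid A} {x : FreeAlgebra k A}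
    (ht : t ∉ nontips k fun v => φ (wordMonomial k v)) (htx : wordMonomial k t - x ∈ I)
    (hx : x ∈ span k (wordMonomial k '' nontips k fun v => φ (wordMonomial k v)))
    (hφx : φ x = φ (wordMonomial k t)) (u v : FreeMonoid A) :
    wordMonomial k (u * t * v) ∈
      I.asIdeal.restrictScalars k ⊔ span k (wordMonomial k '' Iio (u * t * v)) :=
  wordMonomial_mem_sup_span_Iio_of_sub_mem hadm htx (span_mono (image_mono inter_subset_right)
    (mem_span_image_nontips_inter_Iio_of_map_eq (f := φ.toLinearMap) hwf ht hx hφx)) u v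

theorem ker_le_of_wellFoundedOn_reduction {I : TwoSidedIdeal (FreeAlgebra k A)}
    (hI : I ≤ TwoSidedIdeal.ker φ) {s : Set (FreeMonoid A)} (hs : s.WellFoundedOn (· < ·))
    (hout : ∀ w ∉ s, wordMonomial k w ∈ I)
    (hred : ∀ w ∈ s, w ∉ (nontips k fun v => φ (wordMonomial k v)) →
      wordMonomial k w ∈ I.asIdeal.restrictScalars k ⊔ span k (wordMonomial k '' Iio w)) :
    TwoSidedIdeal.ker φ ≤ I := by
  set T := nontips k fun v => φ (wordMonomial k v)
  set Q := I.asIdeal.restrictScalars k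
  have hword : ∀ w, wordMonomial k w ∈ Q ⊔ span k (wordMonomial k '' T) := fun w =>
    sup_le_sup_left (span_mono (image_mono inter_subset_left)) Q
      (mem_sup_span_image_inter_Iic_of_wellFoundedOn (Q := Q) hs
        (fun w hw => TwoSidedIdeal.mem_asIdeal.mpr (hout w hw)) hred w)
  intro x hx
  have hxQ : x ∈ Q ⊔ span k (wordMonomial k '' T) := by
    refine span_le.mpr (range_subset_iff.mpr hword) ?_
    rw [span_range_wordMonomial]
    exact mem_top
  obtain ⟨i, hi, y, hy, rfl⟩ := mem_sup.mp hxQ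
  have hiI : i ∈ I := TwoSidedIdeal.mem_asIdeal.mp hi
  have hy0 : y = 0 := by
    refine disjoint_def.mp (disjoint_span_image_nontips_ker φ.toLinearMap (wordMonomial k)) y hy ?_
    have hφi := (TwoSidedIdeal.mem_ker φ).mp (hI hiI)
    have hφx := (TwoSidedIdeal.mem_ker φ).mp hx
    simp_all
  simpa [hy0] using hiI

end FreeAlgebra

theorem kernel_generated_by_groebner_basis_general
    (p : ℕ) (hp : p.Prime) (G : Type*) [Group G]
    (A : Type*) [Finite A]
    (φ : FreeAlgebra (ZMod p) A →ₐ[ZMod p] MonoidAlgebra (ZMod p) G)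
    (lo : LinearOrder (FreeMonoid A))
    (hadm : ∀ u v₁ v₂ w : FreeMonoid A, lo.le v₁ v₂ →
      lo.le (u * v₁ * w) (u * v₂ * w))
    (IsTip : FreeMonoid A → Prop)
    (hTip : ∀ w, IsTip w ↔ φ (wordMonomial (ZMod p) w) ∈
      Submodule.span (ZMod p)
        ((fun v => φ (wordMonomial (ZMod p) v)) '' {v | lo.lt v w}))
    (IsMinTip : FreeMonoid A → Prop)
    (hMinTip : ∀ w, IsMinTip w ↔ IsTip w ∧
      ∀ t u v : FreeMonoid A, w = u * t * v → ¬(u = 1 ∧ v = 1) → ¬ IsTip t)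
    -- all words of length N map to zero
    (N : ℕ)
    (hN : ∀ w : FreeMonoid A, w.toList.length = N → φ (wordMonomial (ZMod p) w) = 0)
    -- ν(w): the unique k-linear combination of nontips with the same image as w
    (ν : FreeMonoid A → FreeAlgebra (ZMod p) A)
    (hν : ∀ w, IsMinTip w →
      ν w ∈ Submodule.span (ZMod p)
        ((fun v => wordMonomial (ZMod p) v) '' {v : FreeMonoid A | ¬ IsTip v}) ∧
      φ (ν w) = φ (wordMonomial (ZMod p) w)) :
    TwoSidedIdeal.ker φ =
      TwoSidedIdeal.span
        (((fun w => wordMonomial (ZMod p) w - ν w) '' {w : FreeMonoid A | IsMinTip w}) ∪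
         ((fun w => wordMonomial (ZMod p) w) ''
           {w : FreeMonoid A | w.toList.length = N})) := by
  have : Fact p.Prime := ⟨hp⟩
  let _ := lo
  have hT : {v | ¬IsTip v} = nontips (ZMod p) fun v => φ (wordMonomial (ZMod p) v) :=
    Set.ext fun w => (hTip w).not
  set I := TwoSidedIdeal.span
    (((fun w => wordMonomial (ZMod p) w - ν w) '' {w : FreeMonoid A | IsMinTip w}) ∪
      ((fun w => wordMonomial (ZMod p) w) '' {w : FreeMonoid A | w.toList.length = N}))
  have hIker : I ≤ TwoSidedIdeal.ker φ := by
    refine TwoSidedIdeal.span_le.mpr ?_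
    rintro _ (⟨w, hw, rfl⟩ | ⟨w, hw, rfl⟩)
    · exact (TwoSidedIdeal.mem_ker φ).mpr (by rw [map_sub, (hν w hw).2, sub_self])
    · exact (TwoSidedIdeal.mem_ker φ).mpr (hN w hw)
  have hlong : ∀ w : FreeMonoid A, N ≤ w.length → wordMonomial (ZMod p) w ∈ I :=
    fun w => wordMonomial_mem_of_le_length fun u hu =>
      TwoSidedIdeal.subset_span (Or.inr ⟨u, hu, rfl⟩)
  have hshort := (FreeMonoid.finite_setOf_length_lt (A := A) N).wellFoundedOn (r := (· < ·))
  have hwf : {w | φ (wordMonomial (ZMod p) w) ≠ 0}.WellFoundedOn (· < ·) :=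
    hshort.subset fun w hw => not_le.mp fun hNw =>
      hw ((TwoSidedIdeal.mem_ker φ).mp (hIker (hlong w hNw)))
  refine le_antisymm (ker_le_of_wellFoundedOn_reduction φ hIker hshort
    (fun w hw => hlong w (not_lt.mp hw)) fun w _ hw => ?_) hIker
  obtain ⟨u, t, v, rfl, htip, hmin⟩ :=
    FreeMonoid.exists_minimal_factor ((hTip w).mpr (not_not.mp hw))
  have ht : IsMinTip t := (hMinTip t).mpr ⟨htip, hmin⟩
  exact wordMonomial_mem_sup_span_Iio_of_reduction φ hadm hwf (not_not.mpr ((hTip t).mp htip))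
    (TwoSidedIdeal.subset_span (Or.inl ⟨t, ht, rfl⟩)) (hT ▸ (hν t ht).1) (hν t ht).2 u v

/-- if all words of length `N` map to zero, then the relations ideal
`ker φ` is generated as a two-sided ideal by the Gröbner-basis elements `w - ν(w)`
(`w` a minimal tip) together with the words of length `N`. -/
theorem kernel_generated_by_groebner_basis
    (p : ℕ) (hp : p.Prime) (G : Type*) [Group G] [Fintype G] (hG : IsPGroup p G)
    (A : Type*) [Finite A]
    (J : Ideal (MonoidAlgebra (ZMod p) G))
    (hJ : J = (⊥ : Ideal (MonoidAlgebra (ZMod p) G)).jacobson)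
    (φ : FreeAlgebra (ZMod p) A →ₐ[ZMod p] MonoidAlgebra (ZMod p) G)
    (hsurj : Function.Surjective φ)
    (hrad : ∀ a : A, φ (FreeAlgebra.ι (ZMod p) a) ∈ J)
    (lo : LinearOrder (FreeMonoid A))
    (hadm : ∀ u v₁ v₂ w : FreeMonoid A, lo.le v₁ v₂ →
      lo.le (u * v₁ * w) (u * v₂ * w))
    (IsTip : FreeMonoid A → Prop)
    (hTip : ∀ w, IsTip w ↔ φ (wordMonomial (ZMod p) w) ∈
      Submodule.span (ZMod p)
        ((fun v => φ (wordMonomial (ZMod p) v)) '' {v | lo.lt v w}))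
    (IsMinTip : FreeMonoid A → Prop)
    (hMinTip : ∀ w, IsMinTip w ↔ IsTip w ∧
      ∀ t u v : FreeMonoid A, w = u * t * v → ¬(u = 1 ∧ v = 1) → ¬ IsTip t)
    -- all words of length N map to zero
    (N : ℕ)
    (hN : ∀ w : FreeMonoid A, w.toList.length = N → φ (wordMonomial (ZMod p) w) = 0)
    -- ν(w): the unique k-linear combination of nontips with the same image as w
    (ν : FreeMonoid A → FreeAlgebra (ZMod p) A)
    (hν : ∀ w, IsMinTip w →
      ν w ∈ Submodule.span (ZMod p)
        ((fun v => wordMonomial (ZMod p) v) '' {v : FreeMonoid A | ¬ IsTip v}) ∧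
      φ (ν w) = φ (wordMonomial (ZMod p) w)) :
    TwoSidedIdeal.ker φ =
      TwoSidedIdeal.span
        (((fun w => wordMonomial (ZMod p) w - ν w) '' {w : FreeMonoid A | IsMinTip w}) ∪
         ((fun w => wordMonomial (ZMod p) w) ''
           {w : FreeMonoid A | w.toList.length = N})) :=
  kernel_generated_by_groebner_basis_general p hp G A φ lo hadm IsTip hTip IsMinTip hMinTip N hN ν
    hν
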